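/- arXiv:1810.01896 — 5 statements merged into one kernel-verified Lean document; each statement's English description precedes it below -/
import Mathlib

section
/- Let 0 ≤ k ≤ n, let ρ : [0:k] → [0:n] be strictly increasing, and let q ∈ [0:n] with q ∉ [ρ]. Then ε(q,ρ) · φ_{ρ+q} = λ_q · dλ_ρ − dλ_q ∧ φ_ρ, where φ_ρ := Σ_{p∈[ρ]} ε(p, ρ−p) λ_p dλ_{ρ−p} is the Whitney form and ρ+q is the strictly increasing map with image [ρ]∪{q}. -/
open ExteriorAlgebra

set_option synthInstance.maxHeartbeats 1000000
set_option maxHeartbeats 1000000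

noncomputable section

def invSign {m : ℕ} {α : Type*} [LinearOrder α] (f : Fin m → α) : ℤ :=
  (-1 : ℤ) ^ (Finset.univ.filter
    (fun p : Fin m × Fin m => p.1 < p.2 ∧ f p.2 < f p.1)).card

def epsIns {n : ℕ} (q : Fin n) (s : Finset (Fin n)) : ℤ :=
  (-1 : ℤ) ^ (s.filter (fun x => x < q)).card

def epsApp {n : ℕ} (q : Fin n) (s : Finset (Fin n)) : ℤ :=
  (-1 : ℤ) ^ (s.filter (fun x => q < x)).card

def sortedOfFinset {n : ℕ} (s : Finset (Fin (n + 1))) (m : ℕ) : Fin m → Fin (n + 1) :=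
  if h : s.card = m then fun i => (s.orderIsoOfFin h i : Fin (n + 1)) else fun _ => 0

variable {n : ℕ} {E : Type*} [AddCommGroup E] [Module ℝ E]

def dlam (b : AffineBasis (Fin (n + 1)) ℝ E) (i : Fin (n + 1)) : Module.Dual ℝ E :=
  (b.coord i).linear

def dlamWedge (b : AffineBasis (Fin (n + 1)) ℝ E) {k : ℕ} (σ : Fin k → Fin (n + 1)) :
    ExteriorAlgebra ℝ (Module.Dual ℝ E) :=
  (List.ofFn fun i => ι ℝ (dlam b (σ i))).prod

def lamPow (b : AffineBasis (Fin (n + 1)) ℝ E) (α : Fin (n + 1) → ℕ) (x : E) : ℝ :=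
  ∏ i, b.coord i x ^ α i

def whitneyForm (b : AffineBasis (Fin (n + 1)) ℝ E) {m : ℕ} (ρ : Fin m → Fin (n + 1)) (x : E) :
    ExteriorAlgebra ℝ (Module.Dual ℝ E) :=
  ∑ j : Fin m,
    ((epsIns (ρ j) ((Finset.image ρ Finset.univ).erase (ρ j)) : ℝ) * b.coord (ρ j) x) •
      dlamWedge b (sortedOfFinset ((Finset.image ρ Finset.univ).erase (ρ j)) (m - 1))

/-! ### Auxiliary lemmas -/

/-- The wedge of the `dlam`s along a list. -/
def wedgeL (b : AffineBasis (Fin (n + 1)) ℝ E) (l : List (Fin (n + 1))) :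
    ExteriorAlgebra ℝ (Module.Dual ℝ E) :=
  (l.map (fun i => ι ℝ (dlam b i))).prod

lemma dlamWedge_eq_wedgeL (b : AffineBasis (Fin (n + 1)) ℝ E)
    (s : Finset (Fin (n + 1))) {m : ℕ} (h : s.card = m) :
    dlamWedge b (sortedOfFinset s m) = wedgeL b (s.sort (· ≤ ·)) := by
  have hlen : (s.sort (· ≤ ·)).length = m := by rw [Finset.length_sort, h]
  rw [dlamWedge, wedgeL]
  congr 1
  apply List.ext_getElem
  · simp [hlen]
  · intro i h1 h2
    simp only [List.getElem_ofFn, List.getElem_map]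
    have hsf : sortedOfFinset s m = fun i => ((s.orderIsoOfFin h i : Fin (n + 1))) := dif_pos h
    simp only [hsf]
    rfl

lemma sort_insert_eq (A : Finset (Fin (n + 1))) (q : Fin (n + 1)) (hq : q ∉ A) :
    (insert q A).sort (· ≤ ·) = (A.sort (· ≤ ·)).orderedInsert (· ≤ ·) q := by
  have hperm : List.Perm ((insert q A).sort (· ≤ ·)) ((A.sort (· ≤ ·)).orderedInsert (· ≤ ·) q) :=
    ((Finset.sort_perm_toList _ _).trans ((Finset.toList_insert hq).trans
      ((Finset.sort_perm_toList A (· ≤ ·)).symm.cons q))).trans (List.perm_orderedInsert (· ≤ ·) q (A.sort (· ≤ ·))).symm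
  exact List.Perm.eq_of_pairwise' (Finset.pairwise_sort _ _)
    ((Finset.pairwise_sort A _).orderedInsert q _) hperm

lemma ι_mul_wedgeL (b : AffineBasis (Fin (n + 1)) ℝ E) (q : Fin (n + 1)) :
    ∀ l : List (Fin (n + 1)), l.Pairwise (· ≤ ·) → q ∉ l →
      ι ℝ (dlam b q) * wedgeL b l =
        ((-1 : ℤ) ^ (l.countP (fun x => decide (x < q)))) •
          wedgeL b (l.orderedInsert (· ≤ ·) q) := by
  intro l
  induction l with
  | nil => intro _ _; simp [wedgeL, List.orderedInsert]
  | cons a l ih =>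
    intro hs hq
    have hs' : l.Pairwise (· ≤ ·) := hs.of_cons
    have hql : q ∉ l := fun hm => hq (List.mem_cons_of_mem a hm)
    by_cases h : q ≤ a
    · have h0 : (a :: l).countP (fun x => decide (x < q)) = 0 := by
        rw [List.countP_eq_zero]
        intro x hx
        have hax : a ≤ x := by
          rcases List.mem_cons.1 hx with rfl | hx'
          · exact le_rfl
          · exact (List.pairwise_cons.1 hs).1 x hx'
        simp only [decide_eq_true_eq]
        exact not_lt.2 (h.trans hax)
      have hins : (a :: l).orderedInsert (· ≤ ·) q = q :: a :: l := by
        simp [List.orderedInsert, h]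
      rw [h0, hins, pow_zero, one_smul]
      simp [wedgeL]
    · have hal : a < q := lt_of_not_ge h
      have hswap : ι ℝ (dlam b q) * ι ℝ (dlam b a) = -(ι ℝ (dlam b a) * ι ℝ (dlam b q)) :=
        eq_neg_of_add_eq_zero_left (ι_add_mul_swap (dlam b q) (dlam b a))
      have hc : (a :: l).countP (fun x => decide (x < q)) =
          l.countP (fun x => decide (x < q)) + 1 := by
        rw [List.countP_cons]
        simp [hal]
      have hins : (a :: l).orderedInsert (· ≤ ·) q = a :: l.orderedInsert (· ≤ ·) q := by
        simp [List.orderedInsert, h]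
      have hW : wedgeL b (a :: l) = ι ℝ (dlam b a) * wedgeL b l := by simp [wedgeL]
      have hW2 : wedgeL b (a :: l.orderedInsert (· ≤ ·) q) =
          ι ℝ (dlam b a) * wedgeL b (l.orderedInsert (· ≤ ·) q) := by simp [wedgeL]
      rw [hins, hc, hW, hW2, ← mul_assoc, hswap, neg_mul, mul_assoc, ih hs' hql,
        mul_smul_comm, pow_succ, mul_comm _ (-1 : ℤ), neg_one_mul, neg_smul]

lemma countP_sort_eq (A : Finset (Fin (n + 1))) (q : Fin (n + 1)) :
    (A.sort (· ≤ ·)).countP (fun x => decide (x < q)) = (A.filter (fun x => x < q)).card := by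
  rw [(Finset.sort_perm_toList A (· ≤ ·)).countP_eq (fun x => decide (x < q))]
  have hml : ((A.toList : Multiset (Fin (n + 1)))) = A.val := Multiset.coe_toList A.val
  rw [← Multiset.coe_countP, hml, Multiset.countP_eq_card_filter]
  rfl

lemma ι_mul_dlamWedge (b : AffineBasis (Fin (n + 1)) ℝ E) {m : ℕ} (A : Finset (Fin (n + 1)))
    (hA : A.card = m) (q : Fin (n + 1)) (hq : q ∉ A) :
    ι ℝ (dlam b q) * dlamWedge b (sortedOfFinset A m) =
      epsIns q A • dlamWedge b (sortedOfFinset (insert q A) (m + 1)) := by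
  have hA' : (insert q A).card = m + 1 := by rw [Finset.card_insert_of_notMem hq, hA]
  rw [dlamWedge_eq_wedgeL b A hA, dlamWedge_eq_wedgeL b (insert q A) hA',
    sort_insert_eq A q hq,
    ι_mul_wedgeL b q _ (Finset.pairwise_sort _ _) (by simpa using hq)]
  rw [countP_sort_eq]
  rfl

lemma image_sortedOfFinset {s : Finset (Fin (n + 1))} {m : ℕ} (h : s.card = m) :
    Finset.image (sortedOfFinset s m) Finset.univ = s := by
  apply Finset.coe_injective
  rw [Finset.coe_image, Finset.coe_univ, Set.image_univ, sortedOfFinset, dif_pos h]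
  simpa using s.range_orderEmbOfFin h

lemma sortedOfFinset_injective {s : Finset (Fin (n + 1))} {m : ℕ} (h : s.card = m) :
    Function.Injective (sortedOfFinset s m) := by
  rw [sortedOfFinset, dif_pos h]
  exact fun a b hab => (s.orderIsoOfFin h).injective (Subtype.ext hab)

lemma sortedOfFinset_of_strictMono {m : ℕ} {ρ : Fin m → Fin (n + 1)} (hρ : StrictMono ρ) :
    sortedOfFinset (Finset.image ρ Finset.univ) m = ρ := by
  have h : (Finset.image ρ Finset.univ).card = m := by
    rw [Finset.card_image_of_injective _ hρ.injective, Finset.card_univ, Fintype.card_fin]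
  rw [sortedOfFinset, dif_pos h]
  have := Finset.orderEmbOfFin_unique h
    (f := ρ) (fun x => Finset.mem_image_of_mem ρ (Finset.mem_univ x)) hρ
  exact funext fun i => (congrFun this i).symm

lemma whitneyForm_eq_sum (b : AffineBasis (Fin (n + 1)) ℝ E) {m : ℕ} (ρ : Fin m → Fin (n + 1))
    (hρ : Function.Injective ρ) (x : E) :
    whitneyForm b ρ x = ∑ p ∈ Finset.image ρ Finset.univ,
      ((epsIns p ((Finset.image ρ Finset.univ).erase p) : ℝ) * b.coord p x) •
        dlamWedge b (sortedOfFinset ((Finset.image ρ Finset.univ).erase p) (m - 1)) := by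
  rw [Finset.sum_image (fun a _ c _ h => hρ h)]
  rfl

lemma epsIns_insert (q r : Fin (n + 1)) (A : Finset (Fin (n + 1))) (hr : r ∉ A) :
    epsIns q (insert r A) = (if r < q then -1 else 1) * epsIns q A := by
  unfold epsIns
  rw [Finset.filter_insert]
  split_ifs with h
  · rw [Finset.card_insert_of_notMem (fun hm => hr (Finset.mem_of_mem_filter r hm)),
      pow_succ, mul_comm]
  · rw [one_mul]

lemma epsIns_sign_identity (p q : Fin (n + 1)) (A : Finset (Fin (n + 1)))
    (hp : p ∉ A) (hq : q ∉ A) (hpq : p ≠ q) :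
    epsIns q (insert p A) * epsIns p (insert q A) = -(epsIns q A * epsIns p A) := by
  rw [epsIns_insert q p A hp, epsIns_insert p q A hq]
  rcases hpq.lt_or_gt with h | h
  · rw [if_pos h, if_neg (not_lt.2 h.le)]; ring
  · rw [if_neg (not_lt.2 h.le), if_pos h]; ring

/-- Let `0 ≤ k ≤ n`, let `ρ : [0:k] → [0:n]` be strictly increasing and `q ∈ [0:n]` with
`q ∉ [ρ]`.  Then `ε(q,ρ) · φ_{ρ+q} = λ_q · dλ_ρ − dλ_q ∧ φ_ρ`, where `φ` denotes the
Whitney form `φ_τ = Σ_{p∈[τ]} ε(p,τ−p) λ_p dλ_{τ−p}` and `ρ+q` is the strictly increasing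
map with image `[ρ] ∪ {q}` (its increasing enumeration `sortedOfFinset`). -/
theorem whitney_recursion {n : ℕ} {E : Type*} [AddCommGroup E] [Module ℝ E]
    (b : AffineBasis (Fin (n + 1)) ℝ E) {k : ℕ} (hk : k ≤ n)
    (ρ : Fin (k + 1) → Fin (n + 1)) (hρ : StrictMono ρ)
    (q : Fin (n + 1)) (hq : q ∉ Set.range ρ) :
    ∀ x : E,
      epsIns q (Finset.image ρ Finset.univ) •
          whitneyForm b (sortedOfFinset (insert q (Finset.image ρ Finset.univ)) (k + 2)) x =
        b.coord q x • dlamWedge b ρ - ι ℝ (dlam b q) * whitneyForm b ρ x := by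
  intro x
  classical
  set S := Finset.image ρ Finset.univ with hS
  have hρinj : Function.Injective ρ := hρ.injective
  have hqS : q ∉ S := by
    intro hm
    rcases Finset.mem_image.1 hm with ⟨i, _, hi⟩
    exact hq ⟨i, hi⟩
  have hScard : S.card = k + 1 := by
    rw [hS, Finset.card_image_of_injective _ hρinj, Finset.card_univ, Fintype.card_fin]
  have hs'card : (insert q S).card = k + 2 := by
    rw [Finset.card_insert_of_notMem hqS, hScard]
  have hσinj : Function.Injective (sortedOfFinset (insert q S) (k + 2)) :=
    sortedOfFinset_injective hs'card
  have hσim : Finset.image (sortedOfFinset (insert q S) (k + 2)) Finset.univ = insert q S :=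
    image_sortedOfFinset hs'card
  have hsρ : sortedOfFinset S (k + 1) = ρ := by rw [hS]; exact sortedOfFinset_of_strictMono hρ
  rw [whitneyForm_eq_sum b _ hσinj x, hσim, whitneyForm_eq_sum b ρ hρinj x, ← hS]
  rw [Finset.sum_insert hqS, smul_add, Finset.smul_sum, Finset.mul_sum]
  have hqterm : epsIns q S • (((epsIns q ((insert q S).erase q) : ℝ) * b.coord q x) •
      dlamWedge b (sortedOfFinset ((insert q S).erase q) (k + 2 - 1))) =
      b.coord q x • dlamWedge b ρ := by
    rw [Finset.erase_insert hqS]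
    have : sortedOfFinset S (k + 2 - 1) = ρ := hsρ
    rw [this, ← Int.cast_smul_eq_zsmul ℝ, smul_smul, ← mul_assoc, ← Int.cast_mul]
    have he : epsIns q S * epsIns q S = 1 := by
      rw [epsIns, ← pow_add, ← two_mul, pow_mul]
      norm_num
    rw [he]
    norm_num
  rw [hqterm, sub_eq_add_neg, ← Finset.sum_neg_distrib]
  congr 1
  apply Finset.sum_congr rfl
  intro p hp
  have hpq : p ≠ q := fun h => hqS (h ▸ hp)
  have hAcard : (S.erase p).card = k := by rw [Finset.card_erase_of_mem hp, hScard]; omega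
  have hqA : q ∉ S.erase p := fun h => hqS (Finset.mem_of_mem_erase h)
  have hpA : p ∉ S.erase p := Finset.notMem_erase p S
  have herase : (insert q S).erase p = insert q (S.erase p) :=
    Finset.erase_insert_of_ne hpq.symm
  rw [herase]
  have h1 : (k + 1 - 1 : ℕ) = k := by omega
  rw [h1, mul_smul_comm, ι_mul_dlamWedge b (S.erase p) hAcard q hqA]
  have hSins : S = insert p (S.erase p) := (Finset.insert_erase hp).symm
  have hsign : epsIns q S * epsIns p (insert q (S.erase p)) =
      -(epsIns q (S.erase p) * epsIns p (S.erase p)) := by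
    have h0 := epsIns_sign_identity p q (S.erase p) hpA hqA hpq
    rw [← hSins] at h0
    exact h0
  have h22 : (k + 2 - 1 : ℕ) = k + 1 := by omega
  rw [h22, ← Int.cast_smul_eq_zsmul ℝ, ← Int.cast_smul_eq_zsmul ℝ (epsIns q (S.erase p)),
    smul_smul, smul_smul, ← neg_smul]
  congr 1
  have hsign' : (epsIns q S : ℝ) * (epsIns p (insert q (S.erase p)) : ℝ) =
      -((epsIns q (S.erase p) : ℝ) * (epsIns p (S.erase p) : ℝ)) := by
    exact_mod_cast congrArg (Int.cast : ℤ → ℝ) hsign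
  linear_combination (b.coord p x) * hsign'
end
end

section
/- Let 0 ≤ k ≤ n and let ρ : [0:k] → [0:n] be strictly increasing. Then the exterior derivative of the Whitney form φ_ρ satisfies dφ_ρ = (k+1) · dλ_ρ. -/
open ExteriorAlgebra

set_option synthInstance.maxHeartbeats 1000000
set_option maxHeartbeats 1000000

noncomputable section

variable {n : ℕ} {E : Type*} [AddCommGroup E] [Module ℝ E]

lemma wedge_insert {M : Type*} [AddCommGroup M] [Module ℝ M]
    {m : ℕ} (g : Fin (m + 1) → M) (j : Fin (m + 1)) :
    ((-1 : ℤ) ^ (j : ℕ)) •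
        (ι ℝ (g j) * (List.ofFn fun i => ι ℝ (g (j.succAbove i))).prod) =
      (List.ofFn fun i => ι ℝ (g i)).prod := by
  induction m with
  | zero =>
    fin_cases j
    simp [List.ofFn_succ]
  | succ m ih =>
    induction j using Fin.cases with
    | zero =>
      simp [Fin.succAbove_zero, List.ofFn_succ]
    | succ j =>
      have hswap : ι ℝ (g j.succ) * ι ℝ (g 0) = -(ι ℝ (g 0) * ι ℝ (g j.succ)) :=
        eq_neg_of_add_eq_zero_left (ι_add_mul_swap _ _)
      have h0 : (List.ofFn fun i : Fin (m + 1) => ι ℝ (g (j.succ.succAbove i))) =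
          ι ℝ (g 0) :: List.ofFn fun i : Fin m => ι ℝ (g ((j.succAbove i).succ)) := by
        rw [List.ofFn_succ]
        simp
      rw [h0, List.prod_cons, List.ofFn_succ (f := fun i => ι ℝ (g i)), List.prod_cons,
        ← ih (fun i => g i.succ) j, ← mul_assoc, hswap, neg_mul, mul_assoc, smul_neg,
        Fin.val_succ, pow_succ, mul_smul, mul_smul_comm]
      simp

lemma sorted_image {n m : ℕ} (f : Fin m → Fin (n + 1)) (hf : StrictMono f) :
    sortedOfFinset (Finset.image f Finset.univ) m = f := by
  have hc : (Finset.image f Finset.univ).card = m := by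
    rw [Finset.card_image_of_injective _ hf.injective, Finset.card_univ, Fintype.card_fin]
  have := Finset.orderEmbOfFin_unique hc (f := f)
    (fun x => Finset.mem_image_of_mem f (Finset.mem_univ x)) hf
  funext i
  rw [sortedOfFinset, dif_pos hc, Finset.coe_orderIsoOfFin_apply, ← this]

lemma erase_image {n k : ℕ} (ρ : Fin (k + 1) → Fin (n + 1)) (hρ : StrictMono ρ)
    (j : Fin (k + 1)) :
    (Finset.image ρ Finset.univ).erase (ρ j) =
      Finset.image (fun i => ρ (j.succAbove i)) Finset.univ := by
  ext x
  simp only [Finset.mem_erase, Finset.mem_image, Finset.mem_univ, true_and]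
  constructor
  · rintro ⟨hne, i, rfl⟩
    obtain ⟨l, rfl⟩ := Fin.exists_succAbove_eq (fun h : i = j => hne (by rw [h]))
    exact ⟨l, rfl⟩
  · rintro ⟨l, rfl⟩
    exact ⟨fun h => Fin.succAbove_ne j l (hρ.injective h), _, rfl⟩

lemma eps_val {n k : ℕ} (ρ : Fin (k + 1) → Fin (n + 1)) (hρ : StrictMono ρ)
    (j : Fin (k + 1)) :
    epsIns (ρ j) ((Finset.image ρ Finset.univ).erase (ρ j)) = (-1 : ℤ) ^ (j : ℕ) := by
  rw [epsIns, Finset.filter_erase, Finset.erase_eq_of_notMem (by simp),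
    Finset.filter_image]
  have : Finset.filter (fun i => ρ i < ρ j) Finset.univ = Finset.Iio j := by
    ext i; simp [hρ.lt_iff_lt]
  rw [this, Finset.card_image_of_injective _ hρ.injective, Fin.card_Iio]

/-- Let `0 ≤ k ≤ n` and let `ρ : [0:k] → [0:n]` be strictly increasing.  Then the exterior
derivative of the Whitney form `φ_ρ = Σ_{p∈[ρ]} ε(p,ρ−p) λ_p dλ_{ρ−p}` satisfies
`dφ_ρ = (k+1) · dλ_ρ`.  Since each `dλ_{ρ−p}` is a constant form and `d λ_p = dλ_p` (the
linear part of the affine function `λ_p`), the exterior derivative of `φ_ρ` is, by the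
Leibniz rule, exactly the constant form `Σ_{p∈[ρ]} ε(p,ρ−p) dλ_p ∧ dλ_{ρ−p}` appearing on
the left-hand side below. -/
theorem whitney_extDeriv {n : ℕ} {E : Type*} [AddCommGroup E] [Module ℝ E]
    (b : AffineBasis (Fin (n + 1)) ℝ E) {k : ℕ} (hk : k ≤ n)
    (ρ : Fin (k + 1) → Fin (n + 1)) (hρ : StrictMono ρ) :
    ∑ j : Fin (k + 1),
        epsIns (ρ j) ((Finset.image ρ Finset.univ).erase (ρ j)) •
          (ι ℝ (dlam b (ρ j)) *
            dlamWedge b (sortedOfFinset ((Finset.image ρ Finset.univ).erase (ρ j)) k)) =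
      ((k : ℝ) + 1) • dlamWedge b ρ := by
  have key : ∀ j : Fin (k + 1),
      epsIns (ρ j) ((Finset.image ρ Finset.univ).erase (ρ j)) •
        (ι ℝ (dlam b (ρ j)) *
          dlamWedge b (sortedOfFinset ((Finset.image ρ Finset.univ).erase (ρ j)) k)) =
      dlamWedge b ρ := by
    intro j
    rw [eps_val ρ hρ j, erase_image ρ hρ j,
      sorted_image (fun i => ρ (j.succAbove i)) (hρ.comp (Fin.strictMono_succAbove j))]
    exact wedge_insert (fun i => dlam b (ρ i)) j
  rw [Finset.sum_congr rfl fun j _ => key j, Finset.sum_const, Finset.card_univ,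
    Fintype.card_fin, ← Nat.cast_smul_eq_nsmul ℝ]
  push_cast
  ring_nf
end
end

section
/- For r ≥ 1 and 0 ≤ k ≤ n, the set { λ^α dλ_σ : α ∈ A(r,n), σ ∈ Σ(k,n), ⌊α⌋ ∉ [σ] } is a basis of the space P_rΛ^k(T) := span{ λ^α dλ_σ : α ∈ A(r,n), σ ∈ Σ(k,n) } of polynomial differential k-forms over an n-simplex T. -/
open ExteriorAlgebra

set_option synthInstance.maxHeartbeats 1000000
set_option maxHeartbeats 1000000

noncomputable section

variable {n : ℕ} {E : Type*} [AddCommGroup E] [Module ℝ E]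

section Aux

lemma digits_inj (r : ℕ) : ∀ (m : ℕ) (f g : Fin m → ℕ), (∀ i, f i ≤ r) → (∀ i, g i ≤ r) →
    (∑ i, f i * (r+1)^(i:ℕ)) = (∑ i, g i * (r+1)^(i:ℕ)) → f = g := by
  intro m
  induction m with
  | zero => intro f g _ _ _; funext i; exact absurd i.2 (by simp)
  | succ m ih =>
    intro f g hf hg h
    rw [Fin.sum_univ_succ, Fin.sum_univ_succ] at h
    simp only [Fin.val_zero, pow_zero, mul_one, Fin.val_succ] at h
    have key : ∀ u : Fin m → ℕ, (∑ i : Fin m, u i * (r+1)^((i:ℕ)+1)) =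
        (r+1) * ∑ i : Fin m, u i * (r+1)^(i:ℕ) := by
      intro u
      rw [Finset.mul_sum]
      congr 1; funext i; ring
    rw [key (fun i => f i.succ), key (fun i => g i.succ)] at h
    have h0 : f 0 = g 0 := by
      have := congrArg (· % (r+1)) h
      simpa [Nat.add_mul_mod_self_left, Nat.mod_eq_of_lt (Nat.lt_succ_of_le (hf 0)),
        Nat.mod_eq_of_lt (Nat.lt_succ_of_le (hg 0))] using this
    rw [h0] at h
    have h1 : (∑ i : Fin m, f i.succ * (r+1)^(i:ℕ)) = ∑ i : Fin m, g i.succ * (r+1)^(i:ℕ) := by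
      have := Nat.add_left_cancel h
      exact Nat.eq_of_mul_eq_mul_left (Nat.succ_pos r) this
    have := ih (fun i => f i.succ) (fun i => g i.succ) (fun i => hf _) (fun i => hg _) h1
    funext i
    refine Fin.cases ?_ ?_ i
    · exact h0
    · intro j; exact congrFun this j

variable (b : AffineBasis (Fin (n + 1)) ℝ E)

lemma dlam_sub (l i j : Fin (n+1)) : dlam b l (b i - b j) =
    (if l = i then (1:ℝ) else 0) - (if l = j then 1 else 0) := by
  have h2 : dlam b l (b i - b j) = b.coord l (b i) - b.coord l (b j) := by
    have h := (b.coord l).linearMap_vsub (b i) (b j)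
    rw [vsub_eq_sub, vsub_eq_sub] at h
    exact h
  rw [h2, b.coord_apply, b.coord_apply]

lemma sum_dlam : (∑ i, dlam b i) = 0 := by
  ext v
  have h1 : (∑ i, b.coord i (v +ᵥ b 0)) = 1 := b.sum_coord_apply_eq_one _
  have h0 : (∑ i, b.coord i (b 0)) = 1 := b.sum_coord_apply_eq_one _
  have key : ∀ i : Fin (n+1), dlam b i v = b.coord i (v +ᵥ b 0) - b.coord i (b 0) := by
    intro i
    have h := (b.coord i).map_vadd (b 0) v
    rw [vadd_eq_add] at h ⊢
    rw [h]
    show dlam b i v = dlam b i v + (b.coord i) (b 0) - (b.coord i) (b 0)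
    ring
  simp only [LinearMap.coe_sum, Finset.sum_apply, LinearMap.zero_apply, key,
    Finset.sum_sub_distrib, h1, h0, sub_self]

lemma lamPow_indep (r : ℕ) (A : Finset (Fin (n+1) → ℕ)) (hA : ∀ α ∈ A, (∑ i, α i) = r)
    (d : (Fin (n+1) → ℕ) → ℝ)
    (h : ∀ x ∈ convexHull ℝ (Set.range fun i => b i), (∑ α ∈ A, d α * lamPow b α x) = 0) :
    ∀ α ∈ A, d α = 0 := by
  classical
  set w : Fin (n+1) → ℕ := fun i => (r+1)^(i:ℕ) with hw
  set e : (Fin (n+1) → ℕ) → ℕ := fun α => ∑ i, α i * w i with he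
  have stepA : ∀ s ∈ Set.Ioo (0:ℝ) 1, (∑ α ∈ A, d α * s ^ (e α)) = 0 := by
    intro s hs
    have hs0 : 0 < s := hs.1
    set S : ℝ := ∑ i, s ^ (w i) with hS
    have hSpos : 0 < S := Finset.sum_pos (fun i _ => pow_pos hs0 _) Finset.univ_nonempty
    set t : Fin (n+1) → ℝ := fun i => s ^ (w i) / S with ht
    have ht1 : (Finset.univ.sum t) = 1 := by
      rw [← Finset.sum_div]; field_simp; exact hS.symm
    have ht0 : ∀ i ∈ Finset.univ, (0:ℝ) ≤ t i := fun i _ => by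
      positivity
    set x : E := Finset.univ.affineCombination ℝ (fun i => b i) t with hx
    have hmem : x ∈ convexHull ℝ (Set.range fun i => b i) :=
      affineCombination_mem_convexHull ht0 ht1
    have hcoord : ∀ i, b.coord i x = t i := fun i =>
      b.coord_apply_combination_of_mem (Finset.mem_univ i) ht1
    have hlam : ∀ α ∈ A, lamPow b α x = s ^ (e α) / S ^ r := by
      intro α hα
      unfold lamPow
      have h3 : ∀ i, b.coord i x ^ α i = s ^ (α i * w i) / S ^ α i := by
        intro i
        rw [hcoord i]
        rw [div_pow, ← pow_mul, mul_comm (w i) (α i)]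
      rw [Finset.prod_congr rfl (fun i _ => h3 i), Finset.prod_div_distrib,
        Finset.prod_pow_eq_pow_sum, Finset.prod_pow_eq_pow_sum, hA α hα]
    have h0 := h x hmem
    rw [Finset.sum_congr rfl (fun α hα => by rw [hlam α hα])] at h0
    have h1 : (∑ α ∈ A, d α * s ^ e α) / S ^ r = 0 := by
      rw [Finset.sum_div]
      rw [← h0]
      exact Finset.sum_congr rfl fun α _ => mul_div_assoc _ _ _
    rcases div_eq_zero_iff.1 h1 with h2 | h2
    · exact h2
    · exact absurd h2 (pow_ne_zero _ (ne_of_gt hSpos))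
  set p : Polynomial ℝ := ∑ α ∈ A, Polynomial.C (d α) * Polynomial.X ^ (e α) with hp
  have hproot : ∀ s ∈ Set.Ioo (0:ℝ) 1, p.IsRoot s := by
    intro s hs
    have := stepA s hs
    simp only [hp, Polynomial.IsRoot, Polynomial.eval_finset_sum, Polynomial.eval_mul,
      Polynomial.eval_C, Polynomial.eval_pow, Polynomial.eval_X]
    exact this
  have hp0 : p = 0 := by
    apply Polynomial.eq_zero_of_infinite_isRoot
    exact Set.Infinite.mono (fun s hs => hproot s hs) (Set.Ioo_infinite (by norm_num : (0:ℝ) < 1))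
  intro α₀ hα₀
  have hcoeff : p.coeff (e α₀) = d α₀ := by
    rw [hp, Polynomial.finset_sum_coeff]
    rw [Finset.sum_eq_single α₀]
    · simp [Polynomial.coeff_C_mul, Polynomial.coeff_X_pow]
    · intro α hα hne
      have hene : e α ≠ e α₀ := by
        intro heq
        apply hne
        apply digits_inj r (n+1) α α₀
        · intro i
          rw [← hA α hα]
          exact Finset.single_le_sum (fun j _ => Nat.zero_le _) (Finset.mem_univ i)
        · intro i
          rw [← hA α₀ hα₀]
          exact Finset.single_le_sum (fun j _ => Nat.zero_le _) (Finset.mem_univ i)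
        · exact heq
      simp [Polynomial.coeff_C_mul, Polynomial.coeff_X_pow, Ne.symm hene]
    · intro hα₀'
      exact absurd hα₀ hα₀'
  rw [hp0] at hcoeff
  simpa using hcoeff.symm

lemma dlamWedge_eq_iotaMulti {k : ℕ} (σ : Fin k → Fin (n+1)) :
    dlamWedge b σ = ιMulti ℝ k (fun i => dlam b (σ i)) := (ιMulti_apply _).symm

lemma strictMono_exists_not_mem {k : ℕ} {σ τ : Fin k → Fin (n+1)} (hσ : StrictMono σ)
    (hτ : StrictMono τ) (hne : σ ≠ τ) : ∃ a, ∀ c, σ a ≠ τ c := by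
  classical
  by_contra hcon
  push_neg at hcon
  apply hne
  haveI : WellFoundedLT (Fin k) := inferInstance
  apply (hσ.range_inj hτ).1
  have hsub : Set.range σ ⊆ Set.range τ := by
    rintro x ⟨a, rfl⟩
    obtain ⟨c, hc⟩ := hcon a
    exact ⟨c, hc.symm⟩
  have h1 : (Finset.univ.image σ) ⊆ (Finset.univ.image τ) := by
    intro x hx
    simp only [Finset.mem_image, Finset.mem_univ, true_and] at hx ⊢
    obtain ⟨a, rfl⟩ := hx
    obtain ⟨c, hc⟩ := hsub ⟨a, rfl⟩
    exact ⟨c, hc⟩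
  have h2 : (Finset.univ.image σ) = (Finset.univ.image τ) := by
    apply Finset.eq_of_subset_of_card_le h1
    rw [Finset.card_image_of_injective _ hτ.injective,
      Finset.card_image_of_injective _ hσ.injective]
  rw [← Set.image_univ, ← Set.image_univ, ← Finset.coe_univ, ← Finset.coe_image,
    ← Finset.coe_image, h2]

lemma wedge_indep (k : ℕ) (j : Fin (n+1)) :
    LinearIndependent ℝ (fun τ : {τ : Fin k → Fin (n+1) // StrictMono τ ∧ j ∉ Set.range τ} =>
      dlamWedge b τ.1) := by
  classical
  set V : Fin (n+1) → E := fun i => b i - b j with hV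
  have entry : ∀ l i : Fin (n+1), l ≠ j → dlam b l (V i) = if l = i then 1 else 0 := by
    intro l i hl
    rw [hV]
    simp only []
    rw [dlam_sub b l i j]
    simp [hl]
  set Φ : (Fin k → Fin (n+1)) → (ExteriorAlgebra ℝ (Module.Dual ℝ E) →ₗ[ℝ] ℝ) := fun τ =>
    liftAlternating (Function.update
      (fun i => (0 : (Module.Dual ℝ E) [⋀^Fin i]→ₗ[ℝ] ℝ)) k
      ((Matrix.detRowAlternating : (Fin k → ℝ) [⋀^Fin k]→ₗ[ℝ] ℝ).compLinearMap
        (LinearMap.pi (fun a => LinearMap.applyₗ (V (τ a)) ∘ₗ LinearMap.id)))) with hΦ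
  have hΦval : ∀ τ σ : Fin k → Fin (n+1), Φ τ (dlamWedge b σ) =
      Matrix.det (Matrix.of fun a c => dlam b (σ a) (V (τ c))) := by
    intro τ σ
    rw [dlamWedge_eq_iotaMulti, hΦ]
    simp only []
    rw [liftAlternating_apply_ιMulti, Function.update_self]
    rfl
  have hdiag : ∀ τ : {τ : Fin k → Fin (n+1) // StrictMono τ ∧ j ∉ Set.range τ},
      Φ τ.1 (dlamWedge b τ.1) = 1 := by
    rintro ⟨τ, hτ, hjτ⟩
    rw [hΦval]
    have : (Matrix.of fun a c => dlam b (τ a) (V (τ c))) = 1 := by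
      ext a c
      rw [Matrix.of_apply, entry _ _ (fun hc => hjτ ⟨a, hc.symm ▸ rfl⟩)]
      by_cases hac : a = c
      · simp [hac, Matrix.one_apply]
      · have : τ a ≠ τ c := fun hc => hac (hτ.injective hc)
        simp [this, Matrix.one_apply, hac]
    rw [this, Matrix.det_one]
  have hoff : ∀ τ σ : {τ : Fin k → Fin (n+1) // StrictMono τ ∧ j ∉ Set.range τ},
      σ ≠ τ → Φ τ.1 (dlamWedge b σ.1) = 0 := by
    rintro ⟨τ, hτ, hjτ⟩ ⟨σ, hσ, hjσ⟩ hne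
    have hne' : σ ≠ τ := fun h => hne (by simp [h])
    obtain ⟨a, ha⟩ := strictMono_exists_not_mem hσ hτ hne'
    rw [hΦval]
    apply Matrix.det_eq_zero_of_row_eq_zero a
    intro c
    rw [Matrix.of_apply, entry _ _ (fun hc => hjσ ⟨a, hc.symm ▸ rfl⟩)]
    simp [ha c]
  rw [linearIndependent_iff']
  intro t g hsum τ hτ
  have h0 := congrArg (Φ τ.1) hsum
  rw [map_sum, map_zero] at h0
  have h1 : ∀ σ ∈ t, Φ τ.1 (g σ • dlamWedge b σ.1) =
      if σ = τ then g σ else 0 := by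
    intro σ hσ
    rw [map_smul]
    by_cases h : σ = τ
    · rw [if_pos h, h, hdiag, smul_eq_mul, mul_one]
    · rw [if_neg h, hoff τ σ h, smul_eq_mul, mul_zero]
  rw [Finset.sum_congr rfl h1, Finset.sum_ite_eq' t τ g, if_pos hτ] at h0
  exact h0

lemma wedge_span (k : ℕ) (j : Fin (n+1)) (σ : Fin k → Fin (n+1)) (hσ : StrictMono σ) :
    dlamWedge b σ ∈ Submodule.span ℝ (Set.range
      (fun τ : {τ : Fin k → Fin (n+1) // StrictMono τ ∧ j ∉ Set.range τ} =>
        dlamWedge b τ.1)) := by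
  classical
  by_cases hj : j ∈ Set.range σ
  · obtain ⟨a, ha⟩ := hj
    have hdj : dlam b j = -∑ i ∈ Finset.univ.erase j, dlam b i := by
      have h := sum_dlam b
      rw [← Finset.add_sum_erase _ _ (Finset.mem_univ j)] at h
      exact eq_neg_of_add_eq_zero_left h
    rw [dlamWedge_eq_iotaMulti]
    have hupdate : (fun i => dlam b (σ i)) =
        Function.update (fun i => dlam b (σ i)) a (dlam b j) := by
      rw [← ha]
      exact (Function.update_eq_self a _).symm
    rw [hupdate, hdj, AlternatingMap.map_update_neg, AlternatingMap.map_update_sum]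
    apply neg_mem
    apply Submodule.sum_mem
    intro i hi
    have hij : i ≠ j := Finset.ne_of_mem_erase hi
    have hterm : Function.update (fun x => dlam b (σ x)) a (dlam b i) =
        fun x => dlam b (Function.update σ a i x) := by
      funext x
      by_cases hx : x = a
      · subst hx; simp
      · simp [Function.update_of_ne hx]
    rw [hterm]
    set ρ : Fin k → Fin (n+1) := Function.update σ a i with hρ
    by_cases hmem : i ∈ Set.range σ
    · obtain ⟨a', ha'⟩ := hmem
      have haa' : a' ≠ a := by
        intro hcon
        rw [hcon, ha] at ha'
        exact hij ha'.symm
      have hρa : ρ a = i := by simp [hρ]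
      have hρa' : ρ a' = i := by
        rw [hρ]
        simp [Function.update_of_ne haa', ha']
      have : (ιMulti ℝ k fun x => dlam b (ρ x)) = 0 := by
        apply AlternatingMap.map_eq_zero_of_eq _ _ (i := a) (j := a')
        · rw [hρa, hρa']
        · exact fun h => haa' h.symm
      rw [this]
      exact Submodule.zero_mem _
    · have hρinj : Function.Injective ρ := by
        intro x y hxy
        rw [hρ] at hxy
        rcases eq_or_ne x a with hx | hx <;> rcases eq_or_ne y a with hy | hy
        · rw [hx, hy]
        · exfalso
          rw [hx, Function.update_self, Function.update_of_ne hy] at hxy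
          exact hmem ⟨y, hxy.symm⟩
        · exfalso
          rw [hy, Function.update_self, Function.update_of_ne hx] at hxy
          exact hmem ⟨x, hxy⟩
        · rw [Function.update_of_ne hx, Function.update_of_ne hy] at hxy
          exact hσ.injective hxy
      set s : Finset (Fin (n+1)) := Finset.univ.image ρ with hs
      have hcard : s.card = k := by
        rw [hs, Finset.card_image_of_injective _ hρinj, Finset.card_univ, Fintype.card_fin]
      set τ : Fin k → Fin (n+1) := fun x => s.orderEmbOfFin hcard x with hτdef
      have hτmono : StrictMono τ := (s.orderEmbOfFin hcard).strictMono
      have hτrange : Set.range τ = ↑s := s.range_orderEmbOfFin hcard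
      have hjρ : ∀ x, ρ x ≠ j := by
        intro x hx
        by_cases hxa : x = a
        · rw [hxa] at hx
          rw [hρ] at hx
          simp only [Function.update_self] at hx
          exact hij hx
        · rw [hρ] at hx
          simp only [Function.update_of_ne hxa] at hx
          have : x = a := hσ.injective (hx.trans ha.symm)
          exact hxa this
      have hjτ : j ∉ Set.range τ := by
        rw [hτrange]
        intro hjs
        rw [Finset.mem_coe, hs, Finset.mem_image] at hjs
        obtain ⟨x, _, hx⟩ := hjs
        exact hjρ x hx
      have hmem' : ∀ x, ρ x ∈ s := fun x => by
        rw [hs]; exact Finset.mem_image_of_mem _ (Finset.mem_univ x)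
      set g : Fin k → Fin k := fun x => (s.orderIsoOfFin hcard).symm ⟨ρ x, hmem' x⟩ with hg
      have hτg : ∀ x, τ (g x) = ρ x := by
        intro x
        rw [hτdef, hg]
        have := (s.orderIsoOfFin hcard).apply_symm_apply ⟨ρ x, hmem' x⟩
        rw [← Subtype.coe_inj] at this
        exact this
      have hginj : Function.Injective g := by
        intro x y hxy
        apply hρinj
        rw [← hτg x, ← hτg y, hxy]
      have hgbij : Function.Bijective g := Finite.injective_iff_bijective.1 hginj
      set π : Equiv.Perm (Fin k) := Equiv.ofBijective g hgbij with hπ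
      have hcomp : (fun x => dlam b (ρ x)) = (fun x => dlam b (τ x)) ∘ π := by
        funext x
        simp only [Function.comp_apply, hπ, Equiv.ofBijective_apply]
        rw [hτg x]
      rw [hcomp, AlternatingMap.map_perm]
      rcases Int.units_eq_one_or (Equiv.Perm.sign π) with hsign | hsign
      · rw [hsign, one_smul, ← dlamWedge_eq_iotaMulti]
        exact Submodule.subset_span ⟨⟨τ, hτmono, hjτ⟩, rfl⟩
      · rw [hsign, Units.smul_def, Units.val_neg, Units.val_one, neg_zsmul, one_zsmul]
        apply neg_mem
        rw [← dlamWedge_eq_iotaMulti]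
        exact Submodule.subset_span ⟨⟨τ, hτmono, hjτ⟩, rfl⟩
  · exact Submodule.subset_span ⟨⟨σ, hσ, hj⟩, rfl⟩

lemma minsupp_exists {r : ℕ} (hr : 1 ≤ r) (α : Fin (n+1) → ℕ) (hα : (∑ i, α i) = r) :
    ∃ j, α j ≠ 0 ∧ ∀ i < j, α i = 0 := by
  classical
  set F : Finset (Fin (n+1)) := Finset.univ.filter (fun i => α i ≠ 0) with hF
  have hne : F.Nonempty := by
    by_contra hcon
    rw [Finset.not_nonempty_iff_eq_empty] at hcon
    have : ∀ i, α i = 0 := by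
      intro i
      by_contra hi
      have : i ∈ F := Finset.mem_filter.2 ⟨Finset.mem_univ i, hi⟩
      rw [hcon] at this
      exact absurd this (Finset.notMem_empty i)
    rw [Finset.sum_congr rfl (fun i _ => this i)] at hα
    simp at hα
    omega
  refine ⟨F.min' hne, ?_, ?_⟩
  · exact (Finset.mem_filter.1 (F.min'_mem hne)).2
  · intro i hi
    by_contra hcon
    have hiF : i ∈ F := Finset.mem_filter.2 ⟨Finset.mem_univ i, hcon⟩
    exact absurd (F.min'_le i hiF) (not_le.2 hi)

lemma minsupp_unique {α : Fin (n+1) → ℕ} {j j' : Fin (n+1)}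
    (h1 : α j ≠ 0) (h2 : ∀ i < j, α i = 0) (h1' : α j' ≠ 0) (h2' : ∀ i < j', α i = 0) :
    j' = j := by
  rcases lt_trichotomy j j' with h | h | h
  · exact absurd (h2' j h) h1
  · exact h.symm
  · exact absurd (h2 j' h) h1'


end Aux

/-- For `r ≥ 1` and `0 ≤ k ≤ n`, the family `{ λ^α dλ_σ : α ∈ A(r,n), σ ∈ Σ(k,n),
⌊α⌋ ∉ [σ] }` is a basis of the space `P_rΛ^k(T) = span{ λ^α dλ_σ : α ∈ A(r,n),
σ ∈ Σ(k,n) }` of polynomial differential `k`-forms over the `n`-simplex `T` (the convex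
hull of the affine basis points), i.e. it is linearly independent and spans that space.
`⌊α⌋ ∉ [σ]` is expressed by: any index `j` with `α j ≠ 0` and `α i = 0` for all `i < j`
(i.e. the minimal element of the support of `α`) is not in the range of `σ`. -/
theorem basis_PrLambdak {n : ℕ} {E : Type*} [AddCommGroup E] [Module ℝ E]
    (b : AffineBasis (Fin (n + 1)) ℝ E) (r k : ℕ) (hr : 1 ≤ r) (hk : k ≤ n) :
    LinearIndependent ℝ
        (fun p : {q : (Fin (n + 1) → ℕ) × (Fin k → Fin (n + 1)) //
            (∑ i, q.1 i) = r ∧ StrictMono q.2 ∧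
              ∀ j : Fin (n + 1), (q.1 j ≠ 0 ∧ ∀ i < j, q.1 i = 0) → j ∉ Set.range q.2} =>
          (fun x : {x : E // x ∈ convexHull ℝ (Set.range fun i => b i)} =>
            lamPow b p.1.1 x.1 • dlamWedge b p.1.2)) ∧
      Submodule.span ℝ
          (Set.range
            (fun p : {q : (Fin (n + 1) → ℕ) × (Fin k → Fin (n + 1)) //
                (∑ i, q.1 i) = r ∧ StrictMono q.2 ∧
                  ∀ j : Fin (n + 1), (q.1 j ≠ 0 ∧ ∀ i < j, q.1 i = 0) → j ∉ Set.range q.2} =>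
              (fun x : {x : E // x ∈ convexHull ℝ (Set.range fun i => b i)} =>
                lamPow b p.1.1 x.1 • dlamWedge b p.1.2))) =
        Submodule.span ℝ
          {f : {x : E // x ∈ convexHull ℝ (Set.range fun i => b i)} →
              ExteriorAlgebra ℝ (Module.Dual ℝ E) |
            ∃ α : Fin (n + 1) → ℕ, ∃ σ : Fin k → Fin (n + 1),
              (∑ i, α i) = r ∧ StrictMono σ ∧
                f = fun x => lamPow b α x.1 • dlamWedge b σ} := by
  classical
  constructor
  · -- linear independence
    rw [linearIndependent_iff']
    intro t g hsum p₀ hp₀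
    have hpt : ∀ x : {x : E // x ∈ convexHull ℝ (Set.range fun i => b i)},
        (∑ p ∈ t, g p • (lamPow b p.1.1 x.1 • dlamWedge b p.1.2)) = 0 := by
      intro x
      have h := congrFun hsum x
      simpa [Finset.sum_apply, Pi.smul_apply] using h
    set A : Finset (Fin (n+1) → ℕ) := t.image (fun p => p.1.1) with hAdef
    have hAsum : ∀ β ∈ A, (∑ i, β i) = r := by
      intro β hβ
      obtain ⟨p, _, rfl⟩ := Finset.mem_image.1 hβ
      exact p.2.1
    set w : (Fin (n+1) → ℕ) → ExteriorAlgebra ℝ (Module.Dual ℝ E) := fun β =>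
      ∑ p ∈ t.filter (fun p => p.1.1 = β), g p • dlamWedge b p.1.2 with hwdef
    have hw0 : ∀ β ∈ A, w β = 0 := by
      intro β hβ
      rw [← Module.forall_dual_apply_eq_zero_iff ℝ]
      intro φ
      have hforall : ∀ x ∈ convexHull ℝ (Set.range fun i => b i),
          (∑ γ ∈ A, φ (w γ) * lamPow b γ x) = 0 := by
        intro x hx
        have h1 : (∑ γ ∈ A, φ (w γ) * lamPow b γ x) =
            φ (∑ γ ∈ A, lamPow b γ x • w γ) := by
          rw [map_sum]
          exact Finset.sum_congr rfl fun γ _ => by rw [map_smul, smul_eq_mul, mul_comm]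
        rw [h1]
        have h3 : ∀ γ ∈ A, (lamPow b γ x • w γ)
            = ∑ p ∈ t.filter (fun p => p.1.1 = γ),
                g p • (lamPow b p.1.1 x • dlamWedge b p.1.2) := by
          intro γ _
          rw [hwdef]
          rw [Finset.smul_sum]
          refine Finset.sum_congr rfl fun p hp => ?_
          have hpγ : p.1.1 = γ := (Finset.mem_filter.1 hp).2
          rw [hpγ]
          exact smul_comm _ _ _
        have h2 : (∑ γ ∈ A, lamPow b γ x • w γ) = 0 := by
          rw [Finset.sum_congr rfl h3]
          rw [Finset.sum_fiberwise_of_maps_to (fun p hp => Finset.mem_image_of_mem _ hp)]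
          exact hpt ⟨x, hx⟩
        rw [h2, map_zero]
      exact lamPow_indep b r A hAsum (fun γ => φ (w γ)) hforall β hβ
    obtain ⟨j, hj1, hj2⟩ := minsupp_exists hr p₀.1.1 p₀.2.1
    set t' := t.filter (fun p => p.1.1 = p₀.1.1) with ht'
    have hprop : ∀ p : {p // p ∈ t'}, StrictMono (p.1.1.2 : Fin k → Fin (n+1)) ∧
        j ∉ Set.range p.1.1.2 := by
      rintro ⟨p, hp⟩
      have hpα : p.1.1 = p₀.1.1 := (Finset.mem_filter.1 hp).2
      refine ⟨p.2.2.1, ?_⟩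
      apply p.2.2.2 j
      rw [hpα]
      exact ⟨hj1, hj2⟩
    set ψ : {p // p ∈ t'} → {τ : Fin k → Fin (n+1) // StrictMono τ ∧ j ∉ Set.range τ} :=
      fun p => ⟨p.1.1.2, hprop p⟩ with hψdef
    have hψinj : Function.Injective ψ := by
      rintro ⟨p, hp⟩ ⟨q, hq⟩ h
      have h2 : p.1.2 = q.1.2 := congrArg Subtype.val h
      have hpα : p.1.1 = p₀.1.1 := (Finset.mem_filter.1 hp).2
      have hqα : q.1.1 = p₀.1.1 := (Finset.mem_filter.1 hq).2
      exact Subtype.ext (Subtype.ext (Prod.ext (hpα.trans hqα.symm) h2))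
    have hLI := (wedge_indep b k j).comp ψ hψinj
    rw [Fintype.linearIndependent_iff] at hLI
    have hsum' : (∑ p : {p // p ∈ t'}, g p.1 • dlamWedge b p.1.1.2) = 0 := by
      rw [Finset.univ_eq_attach, Finset.sum_attach t' (fun p => g p • dlamWedge b p.1.2)]
      have hα₀A : p₀.1.1 ∈ A := Finset.mem_image_of_mem _ hp₀
      exact hw0 p₀.1.1 hα₀A
    exact hLI (fun p => g p.1) hsum' ⟨p₀, Finset.mem_filter.2 ⟨hp₀, rfl⟩⟩
  · -- span equality
    apply le_antisymm
    · rw [Submodule.span_le]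
      rintro f ⟨p, rfl⟩
      apply Submodule.subset_span
      exact ⟨p.1.1, p.1.2, p.2.1, p.2.2.1, rfl⟩
    · rw [Submodule.span_le]
      rintro f ⟨α, σ, hsumα, hmono, rfl⟩
      obtain ⟨j, hj1, hj2⟩ := minsupp_exists hr α hsumα
      set L : ExteriorAlgebra ℝ (Module.Dual ℝ E) →ₗ[ℝ]
          ({x : E // x ∈ convexHull ℝ (Set.range fun i => b i)} →
            ExteriorAlgebra ℝ (Module.Dual ℝ E)) :=
        { toFun := fun v => fun x => lamPow b α x.1 • v,
          map_add' := fun v w => by funext x; simp [smul_add],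
          map_smul' := fun c v => by funext x; dsimp; exact smul_comm _ c v } with hL
      have h1 := wedge_span b k j σ hmono
      have h2 : L (dlamWedge b σ) ∈ Submodule.map L (Submodule.span ℝ (Set.range
          (fun τ : {τ : Fin k → Fin (n+1) // StrictMono τ ∧ j ∉ Set.range τ} =>
            dlamWedge b τ.1))) :=
        Submodule.mem_map_of_mem h1
      rw [Submodule.map_span] at h2
      refine Submodule.span_le.2 ?_ h2
      rintro f' ⟨v, ⟨τ, rfl⟩, rfl⟩
      apply Submodule.subset_span
      refine ⟨⟨(α, τ.1), hsumα, τ.2.1, ?_⟩, rfl⟩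
      intro j' hj'
      have hjj : j' = j := minsupp_unique hj1 hj2 hj'.1 hj'.2
      rw [hjj]
      exact τ.2.2
end
end

section
/- Let r ∈ ℕ, 0 ≤ k ≤ n, and let (ω_{ασ}) be a family of complex numbers indexed by α ∈ A(r,n) and σ ∈ Σ(k,n). Suppose that for every α ∈ A(r,n) and every σ ∈ Σ(k,n) with 0 ∉ [σ] one has ω_{ασ} − Σ_{p∈[σ]} ε(p, σ−p) ω_{α, σ−p+0} = 0. Then for every α ∈ A(r,n) and every strictly increasing θ : [1:k+1] → [0:n] one has Σ_{p∈[θ]} ε(p, θ−p) ω_{α, θ−p} = 0. Conversely, the second condition implies the first. -/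
lemma epsIns_zero {n : ℕ} (s : Finset (Fin (n + 1))) : epsIns (0 : Fin (n + 1)) s = 1 := by
  unfold epsIns
  have h : s.filter (fun x => x < (0 : Fin (n + 1))) = ∅ := by
    simp [Finset.filter_eq_empty_iff]
  rw [h]
  simp

lemma epsIns_insert_of_lt {n : ℕ} {q a : Fin n} {s : Finset (Fin n)} (h : a < q) (ha : a ∉ s) :
    epsIns q (insert a s) = - epsIns q s := by
  unfold epsIns
  rw [Finset.filter_insert, if_pos h,
    Finset.card_insert_of_notMem (fun hx => ha (Finset.mem_of_mem_filter a hx))]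
  rw [pow_succ]
  ring

lemma epsIns_erase_of_not_lt {n : ℕ} {q a : Fin n} {s : Finset (Fin n)} (h : ¬ a < q) :
    epsIns q (s.erase a) = epsIns q s := by
  unfold epsIns
  congr 2
  rw [Finset.filter_erase, Finset.erase_eq_of_notMem]
  intro hx
  exact h (Finset.mem_filter.mp hx).2

lemma epsIns_erase_of_lt {n : ℕ} {q a : Fin n} {s : Finset (Fin n)} (ha : a ∈ s) (h : a < q) :
    epsIns q (s.erase a) = - epsIns q s := by
  unfold epsIns
  have hm : a ∈ s.filter (fun x => x < q) := Finset.mem_filter.mpr ⟨ha, h⟩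
  rw [Finset.filter_erase, Finset.card_erase_of_mem hm]
  have hc : 1 ≤ (s.filter (fun x => x < q)).card := Finset.card_pos.mpr ⟨a, hm⟩
  have : (-1 : ℤ) ^ ((s.filter (fun x => x < q)).card - 1) * (-1) ^ 1
      = (-1 : ℤ) ^ (s.filter (fun x => x < q)).card := by
    rw [← pow_add, Nat.sub_add_cancel hc]
  linarith [this]

lemma sum_insert_zero {n : ℕ} (f : Finset (Fin (n + 1)) → ℂ) (s : Finset (Fin (n + 1)))
    (h0 : (0 : Fin (n + 1)) ∉ s) :
    ∑ p ∈ insert 0 s, (epsIns p ((insert 0 s).erase p) : ℂ) * f ((insert 0 s).erase p)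
      = f s - ∑ p ∈ s, (epsIns p (s.erase p) : ℂ) * f (insert 0 (s.erase p)) := by
  rw [Finset.sum_insert h0, Finset.erase_insert h0, epsIns_zero]
  have hcongr : ∀ p ∈ s, (epsIns p ((insert 0 s).erase p) : ℂ) * f ((insert 0 s).erase p)
      = -((epsIns p (s.erase p) : ℂ) * f (insert 0 (s.erase p))) := by
    intro p hp
    have hp0 : p ≠ 0 := fun h => h0 (h ▸ hp)
    rw [Finset.erase_insert_of_ne hp0.symm,
      epsIns_insert_of_lt (Fin.pos_of_ne_zero hp0) (fun h => h0 (Finset.mem_of_mem_erase h))]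
    push_cast
    ring
  rw [Finset.sum_congr rfl hcongr, Finset.sum_neg_distrib]
  push_cast
  ring

lemma eps_antisymm {n : ℕ} {t : Finset (Fin n)} {p q : Fin n} (hp : p ∈ t) (hq : q ∈ t)
    (hne : p ≠ q) :
    epsIns p (t.erase p) * epsIns q ((t.erase p).erase q)
      = -(epsIns q (t.erase q) * epsIns p ((t.erase q).erase p)) := by
  have key : ∀ a b : Fin n, a ∈ t → b ∈ t → a < b →
      epsIns a (t.erase a) * epsIns b ((t.erase a).erase b)
        = -(epsIns b (t.erase b) * epsIns a ((t.erase b).erase a)) := by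
    intro a b ha hb hab
    have h1 : epsIns a ((t.erase b).erase a) = epsIns a (t.erase a) := by
      rw [Finset.erase_right_comm, epsIns_erase_of_not_lt (not_lt.mpr hab.le)]
    have h2 : epsIns b ((t.erase a).erase b) = - epsIns b (t.erase b) := by
      rw [Finset.erase_right_comm, epsIns_erase_of_lt (Finset.mem_erase.mpr ⟨hab.ne, ha⟩) hab]
    rw [h1, h2]
    ring
  rcases hne.lt_or_gt with h | h
  · exact key p q hp hq h
  · rw [key q p hq hp h]; ring

lemma sum_sum_erase_eq_zero {α : Type*} [DecidableEq α] {t : Finset α} (f : α → α → ℂ)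
    (h : ∀ p ∈ t, ∀ q ∈ t, p ≠ q → f p q = - f q p) :
    ∑ p ∈ t, ∑ q ∈ t.erase p, f p q = 0 := by
  have key : (∑ p ∈ t, ∑ q ∈ t.erase p, f p q) = - ∑ p ∈ t, ∑ q ∈ t.erase p, f p q := by
    calc (∑ p ∈ t, ∑ q ∈ t.erase p, f p q)
        = ∑ p ∈ t, ∑ q ∈ t, if q ≠ p then f p q else 0 := by
          refine Finset.sum_congr rfl fun p _ => ?_
          rw [← Finset.sum_filter, Finset.filter_ne']
      _ = ∑ q ∈ t, ∑ p ∈ t, if q ≠ p then f p q else 0 := Finset.sum_comm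
      _ = ∑ q ∈ t, ∑ p ∈ t, -(if p ≠ q then f q p else 0) := by
          refine Finset.sum_congr rfl fun q hq => Finset.sum_congr rfl fun p hp => ?_
          by_cases hpq : p = q
          · simp [hpq]
          · rw [if_pos (Ne.symm hpq), if_pos hpq, h p hp q hq hpq]
      _ = - ∑ q ∈ t, ∑ p ∈ t.erase q, f q p := by
          simp only [Finset.sum_neg_distrib]
          congr 1
          refine Finset.sum_congr rfl fun q _ => ?_
          rw [← Finset.sum_filter, Finset.filter_ne']
  linear_combination key / 2

/-- Let `r ∈ ℕ`, `0 ≤ k ≤ n`, and let `ω = (ω_{ασ})` be complex numbers indexed by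
multiindices `α ∈ A(r,n)` and by `σ ∈ Σ(k,n)`; strictly increasing maps `σ` are
identified with their images, finsets `s ⊆ [0:n]` of cardinality `k`, so that
`σ−p` is `s.erase p` and `σ−p+0` is `insert 0 (s.erase p)`.  The condition "for all
`α ∈ A(r,n)` and `σ ∈ Σ(k,n)` with `0 ∉ [σ]`:
`ω_{ασ} − Σ_{p∈[σ]} ε(p,σ−p) ω_{α,σ−p+0} = 0`" holds if and only if
"for all `α ∈ A(r,n)` and all strictly increasing `θ : [1:k+1] → [0:n]`:
`Σ_{p∈[θ]} ε(p,θ−p) ω_{α,θ−p} = 0`" holds. -/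
theorem coefficient_condition_first {n r k : ℕ} (hk : k ≤ n)
    (ω : (Fin (n + 1) → ℕ) → Finset (Fin (n + 1)) → ℂ) :
    (∀ α : Fin (n + 1) → ℕ, (∑ i, α i) = r →
        ∀ s : Finset (Fin (n + 1)), s.card = k → (0 : Fin (n + 1)) ∉ s →
          ω α s - ∑ p ∈ s, (epsIns p (s.erase p) : ℂ) * ω α (insert 0 (s.erase p)) = 0) ↔
      (∀ α : Fin (n + 1) → ℕ, (∑ i, α i) = r →
        ∀ t : Finset (Fin (n + 1)), t.card = k + 1 →
          ∑ p ∈ t, (epsIns p (t.erase p) : ℂ) * ω α (t.erase p) = 0) := by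
  constructor
  · intro h α hα t ht
    by_cases h0 : (0 : Fin (n + 1)) ∈ t
    · have hts : t = insert 0 (t.erase 0) := (Finset.insert_erase h0).symm
      rw [hts, sum_insert_zero (ω α) (t.erase 0) (Finset.notMem_erase 0 t)]
      exact h α hα (t.erase 0) (by rw [Finset.card_erase_of_mem h0, ht]; omega)
        (Finset.notMem_erase 0 t)
    · have hω : ∀ p ∈ t, ω α (t.erase p)
          = ∑ q ∈ t.erase p, (epsIns q ((t.erase p).erase q) : ℂ)
              * ω α (insert 0 ((t.erase p).erase q)) := by
        intro p hp
        have hcard : (t.erase p).card = k := by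
          rw [Finset.card_erase_of_mem hp, ht]; omega
        have h0' : (0 : Fin (n + 1)) ∉ t.erase p := fun hx => h0 (Finset.mem_of_mem_erase hx)
        exact sub_eq_zero.mp (h α hα (t.erase p) hcard h0')
      calc (∑ p ∈ t, (epsIns p (t.erase p) : ℂ) * ω α (t.erase p))
          = ∑ p ∈ t, ∑ q ∈ t.erase p, (epsIns p (t.erase p) : ℂ)
              * ((epsIns q ((t.erase p).erase q) : ℂ)
                * ω α (insert 0 ((t.erase p).erase q))) := by
            refine Finset.sum_congr rfl fun p hp => ?_
            rw [hω p hp, Finset.mul_sum]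
        _ = 0 := by
            apply sum_sum_erase_eq_zero
            intro p hp q hq hpq
            have hz := eps_antisymm hp hq hpq
            have hc : (epsIns p (t.erase p) : ℂ) * (epsIns q ((t.erase p).erase q) : ℂ)
                = -((epsIns q (t.erase q) : ℂ) * (epsIns p ((t.erase q).erase p) : ℂ)) := by
              exact_mod_cast hz
            rw [(Finset.erase_right_comm (s := t) (a := p) (b := q))] at hc ⊢
            linear_combination (ω α (insert 0 ((t.erase q).erase p))) * hc
  · intro h α hα s hs h0s
    have ht := h α hα (insert 0 s) (by rw [Finset.card_insert_of_notMem h0s, hs])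
    rw [sum_insert_zero (ω α) s h0s] at ht
    exact ht
end

section
/- Let 0 ≤ k ≤ n and σ, ρ ∈ Σ(k,n) with |[σ]∩[ρ^c]| ≥ 2, where ρ^c is the complement of ρ in [0:n]. Then dλ_σ ∧ φ_{ρ^c} = 0. -/
open ExteriorAlgebra

set_option synthInstance.maxHeartbeats 1000000
set_option maxHeartbeats 1000000

noncomputable section

variable {n : ℕ} {E : Type*} [AddCommGroup E] [Module ℝ E]

lemma dlamWedge_mul_eq_zero (b : AffineBasis (Fin (n + 1)) ℝ E) {k m : ℕ}
    (σ : Fin k → Fin (n + 1)) (τ : Fin m → Fin (n + 1)) (i : Fin k) (i' : Fin m)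
    (h : σ i = τ i') : dlamWedge b σ * dlamWedge b τ = 0 := by
  have hfun : (fun j => ι ℝ (dlam b (Fin.append σ τ j)))
      = Fin.append (fun i => ι ℝ (dlam b (σ i))) (fun i => ι ℝ (dlam b (τ i))) := by
    funext j
    refine Fin.addCases (fun j => ?_) (fun j => ?_) j <;>
      simp [Fin.append_left, Fin.append_right]
  have h1 : dlamWedge b σ * dlamWedge b τ = dlamWedge b (Fin.append σ τ) := by
    unfold dlamWedge
    rw [← List.prod_append, ← List.ofFn_fin_append, hfun]
  rw [h1]
  have h2 : dlamWedge b (Fin.append σ τ) =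
      ExteriorAlgebra.ιMulti ℝ (k + m) (fun j => dlam b (Fin.append σ τ j)) := by
    rw [ExteriorAlgebra.ιMulti_apply]; rfl
  rw [h2]
  apply AlternatingMap.map_eq_zero_of_eq _ _
    (i := Fin.castAdd m i) (j := Fin.natAdd k i')
  · simp [Fin.append_left, Fin.append_right, h]
  · intro hc
    have := congrArg Fin.val hc
    simp at this
    omega

/-- Let `0 ≤ k ≤ n` and `σ, ρ ∈ Σ(k,n)` with `|[σ] ∩ [ρ^c]| ≥ 2`, where `ρ^c` is the
(strictly increasing enumeration of the) complement of `[ρ]` in `[0:n]`.  Then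
`dλ_σ ∧ φ_{ρ^c} = 0`. -/
theorem dlam_wedge_whitney_compl_eq_zero {n : ℕ} {E : Type*} [AddCommGroup E] [Module ℝ E]
    (b : AffineBasis (Fin (n + 1)) ℝ E) {k : ℕ} (hk : k ≤ n)
    (σ ρ : Fin k → Fin (n + 1)) (hσ : StrictMono σ) (hρ : StrictMono ρ)
    (hcard : 2 ≤ ((Finset.image σ Finset.univ) ∩ (Finset.image ρ Finset.univ)ᶜ).card) :
    ∀ x : E,
      dlamWedge b σ * whitneyForm b (sortedOfFinset (Finset.image ρ Finset.univ)ᶜ (n + 1 - k)) x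
        = 0 := by
  intro x
  classical
  set C := (Finset.image ρ Finset.univ)ᶜ with hC
  have hCcard : C.card = n + 1 - k := by
    rw [hC, Finset.card_compl, Finset.card_image_of_injective _ hρ.injective]
    simp
  set τ := sortedOfFinset C (n + 1 - k) with hτ
  have hτmem : ∀ j, τ j ∈ C := by
    intro j
    rw [hτ, sortedOfFinset, dif_pos hCcard]
    exact (C.orderIsoOfFin hCcard j).2
  unfold whitneyForm
  rw [Finset.mul_sum]
  apply Finset.sum_eq_zero
  intro j _
  rw [mul_smul_comm]
  -- find a common element
  have hsub : Finset.image τ Finset.univ ⊆ C := by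
    intro a ha
    simp only [Finset.mem_image] at ha
    obtain ⟨i, _, rfl⟩ := ha
    exact hτmem i
  set s := (Finset.image τ Finset.univ).erase (τ j) with hs
  have hscard : s.card = n + 1 - k - 1 := by
    rw [hs, Finset.card_erase_of_mem (Finset.mem_image_of_mem _ (Finset.mem_univ j))]
    congr 1
    have hτinj : Function.Injective τ := by
      intro a b hab
      rw [hτ, sortedOfFinset, dif_pos hCcard] at hab
      exact (C.orderIsoOfFin hCcard).injective (Subtype.ext hab)
    rw [Finset.card_image_of_injective _ hτinj]
    simp
  -- intersection still nonempty after erasing one element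
  have hex : ∃ a, a ∈ Finset.image σ Finset.univ ∧ a ∈ s := by
    have hτimg : Finset.image τ Finset.univ = C := by
      apply Finset.eq_of_subset_of_card_le hsub
      rw [hCcard]
      have hτinj : Function.Injective τ := by
        intro a b hab
        rw [hτ, sortedOfFinset, dif_pos hCcard] at hab
        exact (C.orderIsoOfFin hCcard).injective (Subtype.ext hab)
      rw [Finset.card_image_of_injective _ hτinj]
      simp
    have h1 : 1 ≤ ((Finset.image σ Finset.univ ∩ C).erase (τ j)).card := by
      have h2 : (Finset.image σ Finset.univ ∩ C).card - 1 ≤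
          ((Finset.image σ Finset.univ ∩ C).erase (τ j)).card :=
        Finset.pred_card_le_card_erase
      omega
    obtain ⟨a, ha⟩ := Finset.card_pos.mp
      (show 0 < ((Finset.image σ Finset.univ ∩ C).erase (τ j)).card by omega)
    rw [Finset.mem_erase, Finset.mem_inter] at ha
    exact ⟨a, ha.2.1, by rw [hs, hτimg]; exact Finset.mem_erase.mpr ⟨ha.1, ha.2.2⟩⟩
  obtain ⟨a, haσ, has⟩ := hex
  obtain ⟨i, _, hi⟩ := Finset.mem_image.mp haσ
  have hscard' : s.card = n + 1 - k - 1 := hscard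
  have hsorted_surj : ∃ i' : Fin (n + 1 - k - 1),
      sortedOfFinset s (n + 1 - k - 1) i' = a := by
    obtain ⟨i', hi'⟩ := (s.orderIsoOfFin hscard').surjective ⟨a, has⟩
    exact ⟨i', by rw [sortedOfFinset, dif_pos hscard', hi']⟩
  obtain ⟨i', hi'⟩ := hsorted_surj
  rw [dlamWedge_mul_eq_zero b σ _ i i' (by rw [hi, ← hi']), smul_zero]
end
end
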